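/- If P is a well-typed process under session environment Δ = k₁:⊥,…,kₙ:⊥, k′₁:α₁,…,k′ₘ:αₘ, then (1) for each i ≤ m, at most one node of the session dependency graph G(P) is labelled k′ᵢ, and (2) if P contains no top-level restrictions then G(P) has at most n edges. -/

import Mathlib

namespace Sess

/- Session types `α ::= ?(θ).α | !(θ).α | &{l_i:α_i} | ⊕{l_i:α_i} | end`,
with payloads `θ` a basic sort, a service sort, or a session type
(delegation).  Branching and selection are `n`-ary, labels are `Fin n`. -/
mutual
  inductive SType : Type where
    | recv : Payload → SType → SType
    | send : Payload → SType → SType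
    | branch : (n : ℕ) → (Fin n → SType) → SType
    | select : (n : ℕ) → (Fin n → SType) → SType
    | done : SType
  inductive Payload : Type where
    | basicN : Payload
    | basicB : Payload
    | serv : SType → Payload
    | sess : SType → Payload
end

/-- Duality: swaps input/output and branching/selection, pointwise. -/
def SType.dual : SType → SType
  | .recv θ α => .send θ α.dual
  | .send θ α => .recv θ α.dual
  | .branch n ts => .select n (fun i => (ts i).dual)
  | .select n ts => .branch n (fun i => (ts i).dual)
  | .done => .done

/-- First-order values: basic values and service names. -/
inductive Val : Type where
  | vnat : ℕ → Val
  | vbool : Bool → Val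
  | vname : ℕ → Val

/-- Expressions: literals and (value) variables. -/
inductive Expr : Type where
  | lit : Val → Expr
  | evar : ℕ → Expr

/-- Evaluation of (closed) expressions. -/
def Expr.eval : Expr → Option Val
  | .lit v => some v
  | .evar _ => none

/- Processes of the session π-calculus.  Session channels, service names and
variables are natural numbers; branching is `n`-ary with labels `Fin n` and
`sel k j P` selects the `j`-th label. -/
inductive Proc : Type where
  | nil : Proc
  | par : Proc → Proc → Proc
  | nu : ℕ → Proc → Proc                -- (νk)P, session restriction
  | serv : ℕ → ℕ → Proc → Proc          -- a(k).P
  | rserv : ℕ → ℕ → Proc → Proc         -- !a(k).P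
  | req : ℕ → ℕ → Proc → Proc           -- ā(k).P
  | inp : ℕ → ℕ → Proc → Proc           -- k?(x).P
  | out : ℕ → Expr → Proc → Proc        -- k!⟨e⟩.P
  | inS : ℕ → ℕ → Proc → Proc           -- k?((k')).P
  | outS : ℕ → ℕ → Proc → Proc          -- k!⟨⟨k'⟩⟩.P
  | branch : ℕ → (n : ℕ) → (Fin n → Proc) → Proc
  | sel : ℕ → ℕ → Proc → Proc
  | cond : Expr → Proc → Proc → Proc

/-- Free session channels of a process. -/
def fsc : Proc → Finset ℕ
  | .nil => ∅
  | .par P Q => fsc P ∪ fsc Q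
  | .nu k P => (fsc P).erase k
  | .serv _ k P => (fsc P).erase k
  | .rserv _ k P => (fsc P).erase k
  | .req _ k P => (fsc P).erase k
  | .inp k _ P => insert k (fsc P)
  | .out k _ P => insert k (fsc P)
  | .inS k k' P => insert k ((fsc P).erase k')
  | .outS k k' P => insert k (insert k' (fsc P))
  | .branch k n Ps => insert k (Finset.univ.biUnion fun i : Fin n => fsc (Ps i))
  | .sel k _ P => insert k (fsc P)
  | .cond _ P Q => fsc P ∪ fsc Q

/-- All session channels occurring in a process (free or bound). -/
def chans : Proc → Finset ℕ
  | .nil => ∅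
  | .par P Q => chans P ∪ chans Q
  | .nu k P => insert k (chans P)
  | .serv _ k P => insert k (chans P)
  | .rserv _ k P => insert k (chans P)
  | .req _ k P => insert k (chans P)
  | .inp k _ P => insert k (chans P)
  | .out k _ P => insert k (chans P)
  | .inS k k' P => insert k (insert k' (chans P))
  | .outS k k' P => insert k (insert k' (chans P))
  | .branch k n Ps => insert k (Finset.univ.biUnion fun i : Fin n => chans (Ps i))
  | .sel k _ P => insert k (chans P)
  | .cond _ P Q => chans P ∪ chans Q

/-- Renaming of session channels (applied also under binders; used only with
fresh targets, for α-conversion). -/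
def srename (f : ℕ → ℕ) : Proc → Proc
  | .nil => .nil
  | .par P Q => .par (srename f P) (srename f Q)
  | .nu k P => .nu (f k) (srename f P)
  | .serv a k P => .serv a (f k) (srename f P)
  | .rserv a k P => .rserv a (f k) (srename f P)
  | .req a k P => .req a (f k) (srename f P)
  | .inp k x P => .inp (f k) x (srename f P)
  | .out k e P => .out (f k) e (srename f P)
  | .inS k k' P => .inS (f k) (f k') (srename f P)
  | .outS k k' P => .outS (f k) (f k') (srename f P)
  | .branch k n Ps => .branch (f k) n (fun i => srename f (Ps i))
  | .sel k j P => .sel (f k) j (srename f P)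
  | .cond e P Q => .cond e (srename f P) (srename f Q)

/-- Substitution of a value for a variable in an expression. -/
def Expr.substV (x : ℕ) (v : Val) : Expr → Expr
  | .lit w => .lit w
  | .evar y => if y = x then .lit v else .evar y

/-- Substitution in service-name position. -/
def substName (x : ℕ) (v : Val) (a : ℕ) : ℕ :=
  match v with
  | .vname b => if a = x then b else a
  | _ => a

/-- Substitution of a value for a variable in a process. -/
def Proc.substV (x : ℕ) (v : Val) : Proc → Proc
  | .nil => .nil
  | .par P Q => .par (P.substV x v) (Q.substV x v)
  | .nu k P => .nu k (P.substV x v)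
  | .serv a k P => .serv (substName x v a) k (P.substV x v)
  | .rserv a k P => .rserv (substName x v a) k (P.substV x v)
  | .req a k P => .req (substName x v a) k (P.substV x v)
  | .inp k y P => if y = x then .inp k y P else .inp k y (P.substV x v)
  | .out k e P => .out k (e.substV x v) (P.substV x v)
  | .inS k k' P => .inS k k' (P.substV x v)
  | .outS k k' P => .outS k k' (P.substV x v)
  | .branch k n Ps => .branch k n (fun i => (Ps i).substV x v)
  | .sel k j P => .sel k j (P.substV x v)
  | .cond e P Q => .cond (e.substV x v) (P.substV x v) (Q.substV x v)

/-- Structural congruence. -/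
inductive SCong : Proc → Proc → Prop where
  | refl (P) : SCong P P
  | symm : SCong P Q → SCong Q P
  | trans : SCong P Q → SCong Q R → SCong P R
  | parComm (P Q) : SCong (.par P Q) (.par Q P)
  | parAssoc (P Q R) : SCong (.par P (.par Q R)) (.par (.par P Q) R)
  | parNil (P) : SCong (.par P .nil) P
  | nuNil (k) : SCong (.nu k .nil) .nil
  | scope (P Q : Proc) (k : ℕ) : k ∉ fsc P →
      SCong (.par P (.nu k Q)) (.nu k (.par P Q))
  | alpha (P : Proc) (k k' : ℕ) : k' ∉ chans P →
      SCong (.nu k P) (.nu k' (srename (fun c => if c = k then k' else c) P))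
  | parCong : SCong P P' → SCong Q Q' → SCong (.par P Q) (.par P' Q')
  | nuCong (k) : SCong P P' → SCong (.nu k P) (.nu k P')
  | servCong (a k) : SCong P P' → SCong (.serv a k P) (.serv a k P')
  | rservCong (a k) : SCong P P' → SCong (.rserv a k P) (.rserv a k P')
  | reqCong (a k) : SCong P P' → SCong (.req a k P) (.req a k P')
  | inpCong (k x) : SCong P P' → SCong (.inp k x P) (.inp k x P')
  | outCong (k e) : SCong P P' → SCong (.out k e P) (.out k e P')
  | inSCong (k k') : SCong P P' → SCong (.inS k k' P) (.inS k k' P')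
  | outSCong (k k') : SCong P P' → SCong (.outS k k' P) (.outS k k' P')
  | branchCong (k) {n} {Ps Ps' : Fin n → Proc} :
      (∀ i, SCong (Ps i) (Ps' i)) → SCong (.branch k n Ps) (.branch k n Ps')
  | selCong (k j) : SCong P P' → SCong (.sel k j P) (.sel k j P')
  | condCong (e) : SCong P P' → SCong Q Q' →
      SCong (.cond e P Q) (.cond e P' Q')

/-- Reduction semantics. -/
inductive Red : Proc → Proc → Prop where
  | init (a k P Q) :
      Red (.par (.serv a k P) (.req a k Q)) (.nu k (.par P Q))
  | rinit (a k P Q) :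
      Red (.par (.rserv a k P) (.req a k Q))
          (.par (.rserv a k P) (.nu k (.par P Q)))
  | com (k x e P Q v) : e.eval = some v →
      Red (.par (.inp k x P) (.out k e Q)) (.par (P.substV x v) Q)
  | del (k k' P Q) :
      Red (.par (.inS k k' P) (.outS k k' Q)) (.par P Q)
  | sel {n} (k : ℕ) (Ps : Fin n → Proc) (j : ℕ) (h : j < n) (Q) :
      Red (.par (.branch k n Ps) (.sel k j Q)) (.par (Ps ⟨j, h⟩) Q)
  | ifT (e P Q) : e.eval = some (.vbool true) → Red (.cond e P Q) P
  | ifF (e P Q) : e.eval = some (.vbool false) → Red (.cond e P Q) Q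
  | par (Q) : Red P P' → Red (.par P Q) (.par P' Q)
  | res (k) : Red P P' → Red (.nu k P) (.nu k P')
  | str : SCong P Q → Red Q Q' → SCong Q' P' → Red P P'

/-- Entries of session environments: session types or `⊥`. -/
inductive TB : Type where
  | ty : SType → TB
  | bot : TB

/-- Service typings: partial maps from names/variables to sorts (payloads). -/
def PEnv : Type := ℕ → Option Payload

/-- Session typings: partial maps from session channels to types or `⊥`. -/
def SEnv : Type := ℕ → Option TB

/-- Typing of expressions. -/
inductive ETy : PEnv → Expr → Payload → Prop where
  | nat (Γ n) : ETy Γ (.lit (.vnat n)) .basicN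
  | bool (Γ b) : ETy Γ (.lit (.vbool b)) .basicB
  | name {Γ a α} : Γ a = some (.serv α) → ETy Γ (.lit (.vname a)) (.serv α)
  | evar {Γ x S} : Γ x = some S → ETy Γ (.evar x) S

/-- Duality check `Δ₁ ≍ Δ₂`: both environments may mention a channel only
with dual session types. -/
def Compat (Δ₁ Δ₂ : SEnv) : Prop :=
  ∀ k t₁ t₂, Δ₁ k = some t₁ → Δ₂ k = some t₂ →
    ∃ α, t₁ = TB.ty α ∧ t₂ = TB.ty α.dual

/-- Environment composition `Δ₁ ⊙ Δ₂`: channels occurring on both sides get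
`⊥` (both endpoints have been found). -/
def comp (Δ₁ Δ₂ : SEnv) : SEnv := fun k =>
  match Δ₁ k, Δ₂ k with
  | some _, some _ => some TB.bot
  | some t, none => some t
  | none, some t => some t
  | none, none => none

/-- The empty session environment. -/
def emptyS : SEnv := fun _ => none

/-- The session typing judgement `Γ ⊢ P ▷ Δ` with the modified service rule:
a service body is typed with session environment exactly `k : α`. -/
inductive Typed : PEnv → Proc → SEnv → Prop where
  | tServ {Γ a α k P} : Γ a = some (.serv α) →
      Typed Γ P (Function.update emptyS k (some (TB.ty α))) →
      Typed Γ (.serv a k P) emptyS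
  | tRServ {Γ a α k P} : Γ a = some (.serv α) →
      Typed Γ P (Function.update emptyS k (some (TB.ty α))) →
      Typed Γ (.rserv a k P) emptyS
  | tReq {Γ a α k P Δ} : Γ a = some (.serv α) → Δ k = none →
      Typed Γ P (Function.update Δ k (some (TB.ty α.dual))) →
      Typed Γ (.req a k P) Δ
  | tIn {Γ k x S α P Δ} : Δ k = none → (∀ β, S ≠ Payload.sess β) →
      Typed (Function.update Γ x (some S)) P
        (Function.update Δ k (some (TB.ty α))) →
      Typed Γ (.inp k x P) (Function.update Δ k (some (TB.ty (.recv S α))))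
  | tOut {Γ k e S α P Δ} : Δ k = none → ETy Γ e S →
      (∀ β, S ≠ Payload.sess β) →
      Typed Γ P (Function.update Δ k (some (TB.ty α))) →
      Typed Γ (.out k e P) (Function.update Δ k (some (TB.ty (.send S α))))
  | tInS {Γ k k' α β P Δ} : Δ k = none → Δ k' = none → k ≠ k' →
      Typed Γ P (Function.update (Function.update Δ k (some (TB.ty α))) k'
        (some (TB.ty β))) →
      Typed Γ (.inS k k' P)
        (Function.update Δ k (some (TB.ty (.recv (.sess β) α))))
  | tDel {Γ k k' α β P Δ} : Δ k = none → Δ k' = none → k ≠ k' →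
      Typed Γ P (Function.update Δ k (some (TB.ty α))) →
      Typed Γ (.outS k k' P)
        (Function.update (Function.update Δ k
          (some (TB.ty (.send (.sess β) α)))) k' (some (TB.ty β)))
  | tBra {Γ k n} {Ps : Fin n → Proc} {ts : Fin n → SType} {Δ} : Δ k = none →
      (∀ i, Typed Γ (Ps i) (Function.update Δ k (some (TB.ty (ts i))))) →
      Typed Γ (.branch k n Ps)
        (Function.update Δ k (some (TB.ty (.branch n ts))))
  | tSel {Γ k n j} {ts : Fin n → SType} {P Δ} : Δ k = none → (h : j < n) →
      Typed Γ P (Function.update Δ k (some (TB.ty (ts ⟨j, h⟩)))) →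
      Typed Γ (.sel k j P)
        (Function.update Δ k (some (TB.ty (.select n ts))))
  | tPar {Γ P₁ P₂ Δ₁ Δ₂} : Typed Γ P₁ Δ₁ → Typed Γ P₂ Δ₂ → Compat Δ₁ Δ₂ →
      Typed Γ (.par P₁ P₂) (comp Δ₁ Δ₂)
  | tInact {Γ Δ} : (∀ k t, Δ k = some t → t = TB.ty .done) →
      Typed Γ .nil Δ
  | tRes {Γ k P Δ} : Δ k = none →
      Typed Γ P (Function.update Δ k (some TB.bot)) →
      Typed Γ (.nu k P) Δ
  | tCond {Γ e P₁ P₂ Δ} : ETy Γ e .basicB → Typed Γ P₁ Δ → Typed Γ P₂ Δ →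
      Typed Γ (.cond e P₁ P₂) Δ
  | tBot {Γ P Δ k} : Typed Γ P (Function.update Δ k (some (TB.ty .done))) →
      Typed Γ P (Function.update Δ k (some TB.bot))

/-- `P` is well-typed. -/
def WellTyped (P : Proc) : Prop := ∃ Γ Δ, Typed Γ P Δ

/- Multigraphs, walks and acyclicity (cycles are closed walks without
repeated edges). -/
structure Multigraph (V E : Type) where
  ends : E → Sym2 V

inductive Multigraph.Walk {V E : Type} (G : Multigraph V E) : V → V → Type
  | nil (v : V) : Walk G v v
  | cons {u v w : V} (e : E) (h : G.ends e = s(u, v)) (p : Walk G v w) :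
      Walk G u w

def Multigraph.Walk.edges {V E : Type} {G : Multigraph V E} :
    {u v : V} → G.Walk u v → List E
  | _, _, .nil _ => []
  | _, _, .cons e _ p => e :: p.edges

def Multigraph.Acyclic {V E : Type} (G : Multigraph V E) : Prop :=
  ∀ (v : V) (w : G.Walk v v), w.edges.Nodup → w.edges = []

/-- Labelled graphs: nodes `0, …, n-1`, a multiset (list) of edges, and a
labelling of nodes by finite sets of session channels. -/
structure LGraph where
  n : ℕ
  edges : List (ℕ × ℕ)
  labels : ℕ → Finset ℕ

def LGraph.empty : LGraph := ⟨0, [], fun _ => ∅⟩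

def LGraph.single (s : Finset ℕ) : LGraph := ⟨1, [], fun _ => s⟩

/-- Erase a name from every label (used for restriction). -/
def LGraph.eraseL (k : ℕ) (G : LGraph) : LGraph :=
  ⟨G.n, G.edges, fun p => (G.labels p).erase k⟩

/-- Disjoint union of labelled graphs, adding one edge for each pair of
nodes `(p, q)` and each session channel in both their labels. -/
def LGraph.glue (G H : LGraph) : LGraph where
  n := G.n + H.n
  edges :=
    G.edges ++ H.edges.map (fun e => (G.n + e.1, G.n + e.2)) ++
      (List.range G.n).flatMap fun p =>
        (List.range H.n).flatMap fun q =>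
          List.replicate ((G.labels p ∩ H.labels q).card) (p, G.n + q)
  labels := fun p => if p < G.n then G.labels p else H.labels (p - G.n)

/-- The underlying multigraph of a labelled graph. -/
def LGraph.toMG (G : LGraph) : Multigraph ℕ (Fin G.edges.length) :=
  ⟨fun i => s((G.edges.get i).1, (G.edges.get i).2)⟩

def LGraph.Acyclic (G : LGraph) : Prop := G.toMG.Acyclic

/-- `k ⇝ k'` in `G`: some node labelled `k` has a path to some node
labelled `k'`. -/
def LGraph.Reaches (G : LGraph) (k k' : ℕ) : Prop :=
  ∃ p p', p < G.n ∧ p' < G.n ∧ k ∈ G.labels p ∧ k' ∈ G.labels p' ∧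
    Nonempty (G.toMG.Walk p p')

/-- The session dependency graph of a process: one node per thread, labelled
by its free session channels; one edge per shared session channel between
parallel threads; restriction erases labels. -/
def graphOf : Proc → LGraph
  | .nil => .empty
  | .par P Q => (graphOf P).glue (graphOf Q)
  | .nu k P => (graphOf P).eraseL k
  | P => .single (fsc P)

/-- Sub-term relation on processes. -/
inductive Subterm : Proc → Proc → Prop where
  | refl (P) : Subterm P P
  | parL : Subterm Q P₁ → Subterm Q (.par P₁ P₂)
  | parR : Subterm Q P₂ → Subterm Q (.par P₁ P₂)
  | nu (k) : Subterm Q P → Subterm Q (.nu k P)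
  | serv (a k) : Subterm Q P → Subterm Q (.serv a k P)
  | rserv (a k) : Subterm Q P → Subterm Q (.rserv a k P)
  | req (a k) : Subterm Q P → Subterm Q (.req a k P)
  | inp (k x) : Subterm Q P → Subterm Q (.inp k x P)
  | out (k e) : Subterm Q P → Subterm Q (.out k e P)
  | inS (k k') : Subterm Q P → Subterm Q (.inS k k' P)
  | outS (k k') : Subterm Q P → Subterm Q (.outS k k' P)
  | branch (k) {n} {Ps : Fin n → Proc} (i : Fin n) :
      Subterm Q (Ps i) → Subterm Q (.branch k n Ps)
  | sel (k j) : Subterm Q P → Subterm Q (.sel k j P)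
  | condT (e) : Subterm Q P₁ → Subterm Q (.cond e P₁ P₂)
  | condF (e) : Subterm Q P₂ → Subterm Q (.cond e P₁ P₂)

/-- `Q` is a sub-process of `P`: a sub-term of some `P' ≡ P`. -/
def SubProc (Q P : Proc) : Prop := ∃ P', SCong P P' ∧ Subterm Q P'

/-- A process is transparent iff every sub-process has an acyclic session
dependency graph. -/
def Transparent (P : Proc) : Prop := ∀ Q, SubProc Q P → (graphOf Q).Acyclic

/-- `P` contains no restriction. -/
def NoNu : Proc → Prop
  | .nil => True
  | .par P Q => NoNu P ∧ NoNu Q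
  | .nu _ _ => False
  | .serv _ _ P => NoNu P
  | .rserv _ _ P => NoNu P
  | .req _ _ P => NoNu P
  | .inp _ _ P => NoNu P
  | .out _ _ P => NoNu P
  | .inS _ _ P => NoNu P
  | .outS _ _ P => NoNu P
  | .branch _ n Ps => ∀ i : Fin n, NoNu (Ps i)
  | .sel _ _ P => NoNu P
  | .cond _ P Q => NoNu P ∧ NoNu Q

/-- A program: no free session channels, and no occurrence of session
restriction up to structural congruence. -/
def IsProgram (P : Proc) : Prop :=
  fsc P = ∅ ∧ ∃ P', SCong P P' ∧ NoNu P'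

/-- A process has no live session channels when all its session channels are
bound by a service or replicated-service prefix. -/
inductive NoLive : Proc → Prop where
  | nil : NoLive .nil
  | par {P Q} : NoLive P → NoLive Q → NoLive (.par P Q)
  | serv (a k P) : NoLive (.serv a k P)
  | rserv (a k P) : NoLive (.rserv a k P)
  | cond {e P Q} : NoLive P → NoLive Q → NoLive (.cond e P Q)

/-- `Q` is irreducible. -/
def Irred (Q : Proc) : Prop := ∀ R, ¬ Red Q R

/-- Reduction contexts `E ::= · | E|P | (νk)E`. -/
inductive Ctx : Type where
  | hole : Ctx
  | parC : Ctx → Proc → Ctx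
  | nuC : ℕ → Ctx → Ctx

def plug : Ctx → Proc → Proc
  | .hole, P => P
  | .parC E Q, P => .par (plug E P) Q
  | .nuC k E, P => .nu k (plug E P)

/-- One unfolding of the (coinductive) progress property. -/
def ProgressF (X : Proc → Prop) (P : Proc) : Prop :=
  ∀ P', Relation.ReflTransGen Red P P' →
    ∀ (E : Ctx) (P'' : Proc), SCong P' (plug E P'') → ¬ NoLive P'' →
      ∃ Q R, Irred Q ∧ WellTyped (.par P'' Q) ∧ Red (.par P'' Q) R ∧ X R

/-- Progress, as the greatest fixed point of `ProgressF`. -/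
def HasProgress (P : Proc) : Prop :=
  ∃ X : Proc → Prop, (∀ p, X p → ProgressF X p) ∧ X P

end Sess

namespace Sess

/-- `P` contains no top-level restriction. -/
def NoTopRes : Proc → Prop
  | .nu _ _ => False
  | .par P Q => NoTopRes P ∧ NoTopRes Q
  | _ => True

/-- Number of nodes of `G` labelled `k`. -/
def cnt (G : LGraph) (k : ℕ) : ℕ :=
  ((Finset.range G.n).filter (fun p => k ∈ G.labels p)).card

lemma cnt_empty (k : ℕ) : cnt LGraph.empty k = 0 := by
  simp [cnt, LGraph.empty]

lemma cnt_single_le (s : Finset ℕ) (k : ℕ) : cnt (LGraph.single s) k ≤ 1 := by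
  simpa [cnt, LGraph.single] using
    (Finset.card_le_card (Finset.filter_subset _ (Finset.range (LGraph.single s).n)))

lemma cnt_eraseL_le (G : LGraph) (k j : ℕ) : cnt (G.eraseL j) k ≤ cnt G k := by
  apply Finset.card_le_card
  intro p hp
  simp only [Finset.mem_filter, LGraph.eraseL, Finset.mem_erase] at hp ⊢
  exact ⟨hp.1, hp.2.2⟩

lemma cnt_eq_sum (G : LGraph) (k : ℕ) :
    cnt G k = ∑ p ∈ Finset.range G.n, if k ∈ G.labels p then 1 else 0 := by
  unfold cnt
  exact Finset.card_filter _ _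

lemma range_disj (a b : ℕ) :
    Disjoint (Finset.range a) ((Finset.range b).map (addLeftEmbedding a)) := by
  rw [Finset.disjoint_left]
  intro p hp hp'
  simp only [Finset.mem_range, Finset.mem_map, addLeftEmbedding_apply] at hp hp'
  omega

lemma glue_labels_lo (G H : LGraph) (p : ℕ) (hp : p < G.n) :
    (G.glue H).labels p = G.labels p := by
  simp [LGraph.glue, hp]

lemma glue_labels_hi (G H : LGraph) (p : ℕ) :
    (G.glue H).labels (G.n + p) = H.labels p := by
  simp [LGraph.glue]

lemma cnt_glue (G H : LGraph) (k : ℕ) :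
    cnt (G.glue H) k = cnt G k + cnt H k := by
  rw [cnt_eq_sum, cnt_eq_sum, cnt_eq_sum]
  have hn : (G.glue H).n = G.n + H.n := rfl
  rw [hn, Finset.range_add, Finset.sum_union (range_disj _ _), Finset.sum_map]
  congr 1
  · refine Finset.sum_congr rfl fun p hp => ?_
    rw [glue_labels_lo G H p (Finset.mem_range.mp hp)]
  · refine Finset.sum_congr rfl fun p _ => ?_
    rw [addLeftEmbedding_apply, glue_labels_hi]

lemma flatMap_range_length {α : Type} (f : ℕ → List α) (n : ℕ) :
    ((List.range n).flatMap f).length = ∑ p ∈ Finset.range n, (f p).length := by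
  induction n with
  | zero => simp
  | succ n ih =>
      rw [List.range_succ, List.flatMap_append, List.length_append, ih,
        Finset.sum_range_succ]
      simp

lemma glue_edges_length (G H : LGraph) :
    (G.glue H).edges.length = G.edges.length + H.edges.length +
      ∑ p ∈ Finset.range G.n, ∑ q ∈ Finset.range H.n,
        (G.labels p ∩ H.labels q).card := by
  have he : (G.glue H).edges =
      G.edges ++ H.edges.map (fun e => (G.n + e.1, G.n + e.2)) ++
        (List.range G.n).flatMap (fun p =>
          (List.range H.n).flatMap fun q =>
            List.replicate ((G.labels p ∩ H.labels q).card) (p, G.n + q)) := rfl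
  rw [he, List.length_append, List.length_append, List.length_map,
    flatMap_range_length]
  congr 1
  refine Finset.sum_congr rfl fun p _ => ?_
  rw [flatMap_range_length]
  refine Finset.sum_congr rfl fun q _ => ?_
  rw [List.length_replicate]

lemma cross_le (G H : LGraph) (S : Finset ℕ)
    (hsub : ∀ p q, G.labels p ∩ H.labels q ⊆ S)
    (h1 : ∀ k ∈ S, cnt G k ≤ 1) (h2 : ∀ k ∈ S, cnt H k ≤ 1) :
    ∑ p ∈ Finset.range G.n, ∑ q ∈ Finset.range H.n,
      (G.labels p ∩ H.labels q).card ≤ S.card := by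
  have key : ∀ p q, (G.labels p ∩ H.labels q).card =
      ∑ k ∈ S, (if k ∈ G.labels p then 1 else 0) * (if k ∈ H.labels q then 1 else 0) := by
    intro p q
    have h1' : G.labels p ∩ H.labels q = S.filter (fun k => k ∈ G.labels p ∩ H.labels q) := by
      rw [Finset.filter_mem_eq_inter, Finset.inter_eq_right.mpr (hsub p q)]
    rw [h1', Finset.card_filter]
    refine Finset.sum_congr rfl fun k _ => ?_
    by_cases hG : k ∈ G.labels p <;> by_cases hH : k ∈ H.labels q <;> simp [hG, hH]
  calc ∑ p ∈ Finset.range G.n, ∑ q ∈ Finset.range H.n, (G.labels p ∩ H.labels q).card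
      = ∑ p ∈ Finset.range G.n, ∑ q ∈ Finset.range H.n, ∑ k ∈ S,
          (if k ∈ G.labels p then 1 else 0) * (if k ∈ H.labels q then 1 else 0) := by
        exact Finset.sum_congr rfl fun p _ => Finset.sum_congr rfl fun q _ => key p q
    _ = ∑ p ∈ Finset.range G.n, ∑ k ∈ S, ∑ q ∈ Finset.range H.n,
          (if k ∈ G.labels p then 1 else 0) * (if k ∈ H.labels q then 1 else 0) :=
        Finset.sum_congr rfl fun p _ => Finset.sum_comm
    _ = ∑ k ∈ S, ∑ p ∈ Finset.range G.n, ∑ q ∈ Finset.range H.n,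
          (if k ∈ G.labels p then 1 else 0) * (if k ∈ H.labels q then 1 else 0) :=
        Finset.sum_comm
    _ = ∑ k ∈ S, cnt G k * cnt H k := by
        refine Finset.sum_congr rfl fun k _ => ?_
        rw [cnt_eq_sum, cnt_eq_sum, Finset.sum_mul_sum]
    _ ≤ ∑ _k ∈ S, 1 :=
        Finset.sum_le_sum fun k hk => Nat.mul_le_mul (h1 k hk) (h2 k hk)
    _ = S.card := by simp

lemma labels_sub_fsc : ∀ (P : Proc) (p : ℕ), (graphOf P).labels p ⊆ fsc P := by
  intro P
  induction P with
  | nil => intro p; simp [graphOf, LGraph.empty, fsc]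
  | par P Q ihP ihQ =>
      intro p k hk
      simp only [graphOf, LGraph.glue] at hk
      simp only [fsc, Finset.mem_union]
      split at hk
      · exact Or.inl (ihP _ hk)
      · exact Or.inr (ihQ _ hk)
  | nu j P ih =>
      intro p k hk
      simp only [graphOf, LGraph.eraseL, Finset.mem_erase] at hk
      simp only [fsc, Finset.mem_erase]
      exact ⟨hk.1, ih _ hk.2⟩
  | serv a j P ih => intro p; simp [graphOf, LGraph.single]
  | rserv a j P ih => intro p; simp [graphOf, LGraph.single]
  | req a j P ih => intro p; simp [graphOf, LGraph.single]
  | inp j x P ih => intro p; simp [graphOf, LGraph.single]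
  | out j e P ih => intro p; simp [graphOf, LGraph.single]
  | inS j j' P ih => intro p; simp [graphOf, LGraph.single]
  | outS j j' P ih => intro p; simp [graphOf, LGraph.single]
  | branch j n Ps ih => intro p; simp [graphOf, LGraph.single]
  | sel j i P ih => intro p; simp [graphOf, LGraph.single]
  | cond e P Q ihP ihQ => intro p; simp [graphOf, LGraph.single]

lemma upd_isSome {Δ : ℕ → Option TB} {k j : ℕ} {t : TB} :
    (Function.update Δ k (some t) j).isSome ↔ (j = k ∨ (Δ j).isSome) := by
  by_cases h : j = k <;> simp [Function.update_apply, h]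

lemma comp_isSome {Δ₁ Δ₂ : SEnv} {j : ℕ} :
    (comp Δ₁ Δ₂ j).isSome ↔ ((Δ₁ j).isSome ∨ (Δ₂ j).isSome) := by
  unfold comp
  rcases h1 : Δ₁ j with _ | t1 <;> rcases h2 : Δ₂ j with _ | t2 <;> simp

lemma typed_fsc_some {Γ : PEnv} {P : Proc} {Δ : SEnv} (hT : Typed Γ P Δ) :
    ∀ j ∈ fsc P, (Δ j).isSome := by
  induction hT with
  | tServ h hT ih =>
      intro j hj
      simp only [fsc, Finset.mem_erase] at hj
      have := ih j hj.2
      have := (upd_isSome (Δ := emptyS)).mp this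
      rcases this with h' | h'
      · exact absurd h' hj.1
      · simp [emptyS] at h'
  | tRServ h hT ih =>
      intro j hj
      simp only [fsc, Finset.mem_erase] at hj
      have := ih j hj.2
      have := (upd_isSome (Δ := emptyS)).mp this
      rcases this with h' | h'
      · exact absurd h' hj.1
      · simp [emptyS] at h'
  | tReq ha hk hT ih =>
      intro j hj
      simp only [fsc, Finset.mem_erase] at hj
      have := ih j hj.2
      rw [upd_isSome] at this
      rcases this with h' | h'
      · exact absurd h' hj.1
      · exact h'
  | tIn hk hS hT ih =>
      intro j hj
      rw [upd_isSome]
      simp only [fsc, Finset.mem_insert] at hj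
      rcases hj with rfl | hj
      · exact Or.inl rfl
      · have := ih j hj; rwa [upd_isSome] at this
  | tOut hk he hS hT ih =>
      intro j hj
      rw [upd_isSome]
      simp only [fsc, Finset.mem_insert] at hj
      rcases hj with rfl | hj
      · exact Or.inl rfl
      · have := ih j hj; rwa [upd_isSome] at this
  | tInS hk hk' hne hT ih =>
      intro j hj
      rw [upd_isSome]
      simp only [fsc, Finset.mem_insert, Finset.mem_erase] at hj
      rcases hj with rfl | ⟨hne', hj⟩
      · exact Or.inl rfl
      · have := ih j hj
        rw [upd_isSome, upd_isSome] at this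
        rcases this with h' | h' | h'
        · exact absurd h' hne'
        · exact Or.inl h'
        · exact Or.inr h'
  | tDel hk hk' hne hT ih =>
      intro j hj
      rw [upd_isSome, upd_isSome]
      simp only [fsc, Finset.mem_insert] at hj
      rcases hj with rfl | rfl | hj
      · exact Or.inr (Or.inl rfl)
      · exact Or.inl rfl
      · have := ih j hj
        rw [upd_isSome] at this
        rcases this with h' | h'
        · exact Or.inr (Or.inl h')
        · exact Or.inr (Or.inr h')
  | tBra hk hT ih =>
      intro j hj
      rw [upd_isSome]
      simp only [fsc, Finset.mem_insert, Finset.mem_biUnion] at hj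
      rcases hj with rfl | ⟨i, _, hj⟩
      · exact Or.inl rfl
      · have := ih i j hj; rwa [upd_isSome] at this
  | tSel hk h hT ih =>
      intro j hj
      rw [upd_isSome]
      simp only [fsc, Finset.mem_insert] at hj
      rcases hj with rfl | hj
      · exact Or.inl rfl
      · have := ih j hj; rwa [upd_isSome] at this
  | tPar hT1 hT2 hc ih1 ih2 =>
      intro j hj
      rw [comp_isSome]
      simp only [fsc, Finset.mem_union] at hj
      rcases hj with hj | hj
      · exact Or.inl (ih1 j hj)
      · exact Or.inr (ih2 j hj)
  | tInact h => intro j hj; simp [fsc] at hj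
  | tRes hk hT ih =>
      intro j hj
      simp only [fsc, Finset.mem_erase] at hj
      have := ih j hj.2
      rw [upd_isSome] at this
      rcases this with h' | h'
      · exact absurd h' hj.1
      · exact h'
  | tCond he hT1 hT2 ih1 ih2 =>
      intro j hj
      simp only [fsc, Finset.mem_union] at hj
      rcases hj with hj | hj
      · exact ih1 j hj
      · exact ih2 j hj
  | tBot hT ih =>
      intro j hj
      rw [upd_isSome]
      have := ih j hj
      rwa [upd_isSome] at this

lemma cnt_eq_zero {Γ : PEnv} {P : Proc} {Δ : SEnv} (hT : Typed Γ P Δ)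
    {k : ℕ} (hk : Δ k = none) : cnt (graphOf P) k = 0 := by
  rw [cnt, Finset.card_eq_zero, Finset.filter_eq_empty_iff]
  intro p _
  intro hmem
  have := typed_fsc_some hT k (labels_sub_fsc P p hmem)
  rw [hk] at this
  simp at this

lemma graph_bounds_aux {Γ : PEnv} {P : Proc} {Δ : SEnv} (hT : Typed Γ P Δ) :
    (∀ k α, Δ k = some (TB.ty α) → cnt (graphOf P) k ≤ 1) ∧
    (∀ bots : Finset ℕ, (∀ k, Δ k = some TB.bot → k ∈ bots) → NoTopRes P →
      (graphOf P).edges.length ≤ bots.card) := by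
  induction hT with
  | tServ h hT ih =>
      exact ⟨fun k' α' _ => cnt_single_le _ _, fun bots _ _ => by
        simp [graphOf, LGraph.single]⟩
  | tRServ h hT ih =>
      exact ⟨fun k' α' _ => cnt_single_le _ _, fun bots _ _ => by
        simp [graphOf, LGraph.single]⟩
  | tReq _ _ _ _ =>
      exact ⟨fun k' α' _ => cnt_single_le _ _, fun bots _ _ => by
        simp [graphOf, LGraph.single]⟩
  | tIn _ _ _ _ =>
      exact ⟨fun k' α' _ => cnt_single_le _ _, fun bots _ _ => by
        simp [graphOf, LGraph.single]⟩
  | tOut _ _ _ _ _ =>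
      exact ⟨fun k' α' _ => cnt_single_le _ _, fun bots _ _ => by
        simp [graphOf, LGraph.single]⟩
  | tInS _ _ _ _ _ =>
      exact ⟨fun k' α' _ => cnt_single_le _ _, fun bots _ _ => by
        simp [graphOf, LGraph.single]⟩
  | tDel _ _ _ _ _ =>
      exact ⟨fun k' α' _ => cnt_single_le _ _, fun bots _ _ => by
        simp [graphOf, LGraph.single]⟩
  | tBra _ _ _ =>
      exact ⟨fun k' α' _ => cnt_single_le _ _, fun bots _ _ => by
        simp [graphOf, LGraph.single]⟩
  | tSel _ _ _ _ =>
      exact ⟨fun k' α' _ => cnt_single_le _ _, fun bots _ _ => by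
        simp [graphOf, LGraph.single]⟩
  | tCond _ _ _ _ _ =>
      exact ⟨fun k' α' _ => cnt_single_le _ _, fun bots _ _ => by
        simp [graphOf, LGraph.single]⟩
  | tInact h =>
      exact ⟨fun k' α' _ => by simp [cnt_empty, graphOf], fun bots _ _ => by
        simp [graphOf, LGraph.empty]⟩
  | @tRes Γ k P Δ hk hT ih =>
      constructor
      · intro j α hj
        have hne : j ≠ k := fun h => by rw [h, hk] at hj; simp at hj
        have : Function.update Δ k (some TB.bot) j = some (TB.ty α) := by
          rw [Function.update_apply, if_neg hne]; exact hj
        exact le_trans (cnt_eraseL_le _ _ _) (ih.1 j α this)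
      · intro bots _ hnt
        exact absurd hnt (by simp [NoTopRes])
  | @tBot Γ P Δ k hT ih =>
      constructor
      · intro j α hj
        have hne : j ≠ k := by
          intro h; rw [h, Function.update_self] at hj; simp at hj
        rw [Function.update_apply, if_neg hne] at hj
        apply ih.1 j α
        rw [Function.update_apply, if_neg hne]; exact hj
      · intro bots hb hnt
        apply ih.2 bots _ hnt
        intro j hj
        by_cases h : j = k
        · rw [h, Function.update_self] at hj; simp at hj
        · rw [Function.update_apply, if_neg h] at hj
          apply hb j
          rw [Function.update_apply, if_neg h]; exact hj
  | @tPar Γ P₁ P₂ Δ₁ Δ₂ hT1 hT2 hc ih1 ih2 =>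
      have hgr : graphOf (Proc.par P₁ P₂) = (graphOf P₁).glue (graphOf P₂) := rfl
      constructor
      · intro k α hk
        rw [hgr, cnt_glue]
        rcases h1 : Δ₁ k with _ | t1 <;> rcases h2 : Δ₂ k with _ | t2
        · exfalso
          have hn : comp Δ₁ Δ₂ k = none := by unfold comp; rw [h1, h2]
          rw [hk] at hn; simp at hn
        · have hn : comp Δ₁ Δ₂ k = some t2 := by unfold comp; rw [h1, h2]
          rw [hk] at hn
          injection hn with hn
          rw [← hn] at h2
          have := cnt_eq_zero hT1 h1
          rw [this, Nat.zero_add]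
          exact ih2.1 k α h2
        · have hn : comp Δ₁ Δ₂ k = some t1 := by unfold comp; rw [h1, h2]
          rw [hk] at hn
          injection hn with hn
          rw [← hn] at h1
          have := cnt_eq_zero hT2 h2
          rw [this, Nat.add_zero]
          exact ih1.1 k α h1
        · exfalso
          have hn : comp Δ₁ Δ₂ k = some TB.bot := by unfold comp; rw [h1, h2]
          rw [hk] at hn
          injection hn with hn
          simp at hn
      · intro bots hb hnt
        obtain ⟨hnt1, hnt2⟩ := hnt
        classical
        set B₁ := bots.filter (fun j => (Δ₁ j).isSome ∧ (Δ₂ j).isNone) with hB₁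
        set B₂ := bots.filter (fun j => (Δ₁ j).isNone ∧ (Δ₂ j).isSome) with hB₂
        set S := bots.filter (fun j => (Δ₁ j).isSome ∧ (Δ₂ j).isSome) with hS
        have hshared : ∀ j ∈ S, (∃ α, Δ₁ j = some (TB.ty α)) ∧
            (∃ β, Δ₂ j = some (TB.ty β)) := by
          intro j hj
          rw [hS, Finset.mem_filter] at hj
          obtain ⟨t1, ht1⟩ := Option.isSome_iff_exists.mp hj.2.1
          obtain ⟨t2, ht2⟩ := Option.isSome_iff_exists.mp hj.2.2
          obtain ⟨α, hα1, hα2⟩ := hc j t1 t2 ht1 ht2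
          exact ⟨⟨α, by rw [ht1, hα1]⟩, ⟨α.dual, by rw [ht2, hα2]⟩⟩
        have hb1 : ∀ j, Δ₁ j = some TB.bot → j ∈ B₁ := by
          intro j hj
          have h2 : Δ₂ j = none := by
            rcases h2' : Δ₂ j with _ | t2
            · rfl
            · obtain ⟨α, hα, _⟩ := hc j _ _ hj h2'
              simp at hα
          rw [hB₁, Finset.mem_filter]
          refine ⟨hb j ?_, by simp [hj, h2]⟩
          unfold comp; rw [hj, h2]
        have hb2 : ∀ j, Δ₂ j = some TB.bot → j ∈ B₂ := by
          intro j hj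
          have h1 : Δ₁ j = none := by
            rcases h1' : Δ₁ j with _ | t1
            · rfl
            · obtain ⟨α, _, hα⟩ := hc j _ _ h1' hj
              simp at hα
          rw [hB₂, Finset.mem_filter]
          refine ⟨hb j ?_, by simp [hj, h1]⟩
          unfold comp; rw [hj, h1]
        have hcross : ∑ p ∈ Finset.range (graphOf P₁).n, ∑ q ∈ Finset.range (graphOf P₂).n,
            ((graphOf P₁).labels p ∩ (graphOf P₂).labels q).card ≤ S.card := by
          apply cross_le
          · intro p q j hj
            rw [Finset.mem_inter] at hj
            have hf1 : j ∈ fsc P₁ := labels_sub_fsc P₁ p hj.1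
            have hf2 : j ∈ fsc P₂ := labels_sub_fsc P₂ q hj.2
            have hs1 := typed_fsc_some hT1 j hf1
            have hs2 := typed_fsc_some hT2 j hf2
            rw [hS, Finset.mem_filter]
            refine ⟨hb j ?_, hs1, hs2⟩
            obtain ⟨t1, ht1⟩ := Option.isSome_iff_exists.mp hs1
            obtain ⟨t2, ht2⟩ := Option.isSome_iff_exists.mp hs2
            unfold comp; rw [ht1, ht2]
          · intro j hj
            obtain ⟨⟨α, hα⟩, _⟩ := hshared j hj
            exact ih1.1 j α hα
          · intro j hj
            obtain ⟨_, ⟨β, hβ⟩⟩ := hshared j hj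
            exact ih2.1 j β hβ
        have hd12 : Disjoint B₁ B₂ := by
          rw [Finset.disjoint_left]
          intro j hj1 hj2
          rw [hB₁, Finset.mem_filter] at hj1
          rw [hB₂, Finset.mem_filter] at hj2
          rcases h : Δ₁ j with _ | t
          · rw [h] at hj1; simp at hj1
          · rw [h] at hj2; simp at hj2
        have hd3 : Disjoint (B₁ ∪ B₂) S := by
          rw [Finset.disjoint_left]
          intro j hj1 hj2
          rw [hS, Finset.mem_filter] at hj2
          rw [Finset.mem_union, hB₁, hB₂, Finset.mem_filter, Finset.mem_filter] at hj1
          rcases hj1 with hj1 | hj1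
          · have h' := hj1.2.2
            rw [Option.isNone_iff_eq_none] at h'
            rw [h'] at hj2; simp at hj2
          · have h' := hj1.2.1
            rw [Option.isNone_iff_eq_none] at h'
            rw [h'] at hj2; simp at hj2
        have hcard : B₁.card + B₂.card + S.card ≤ bots.card := by
          rw [← Finset.card_union_of_disjoint hd12, ← Finset.card_union_of_disjoint hd3]
          apply Finset.card_le_card
          intro j hj
          rw [Finset.mem_union, Finset.mem_union] at hj
          rcases hj with (hj | hj) | hj
          · exact (Finset.mem_filter.mp hj).1
          · exact (Finset.mem_filter.mp hj).1
          · exact (Finset.mem_filter.mp hj).1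
        have h1 := ih1.2 B₁ hb1 hnt1
        have h2 := ih2.2 B₂ hb2 hnt2
        rw [hgr, glue_edges_length]
        omega


/-- if `Γ ⊢ P ▷ Δ` where `Δ` assigns `⊥` exactly to the
channels in `bots` and session types exactly to the channels in `tys`, then
(1) each channel with a session type labels at most one node of the session
dependency graph of `P`, and (2) if `P` has no top-level restrictions then
the graph has at most `bots.card` edges. -/
theorem graph_of_typed_bounds {Γ : PEnv} {P : Proc} {Δ : SEnv}
    (bots tys : Finset ℕ)
    (hbots : ∀ k, k ∈ bots ↔ Δ k = some TB.bot)
    (htys : ∀ k, k ∈ tys ↔ ∃ α, Δ k = some (TB.ty α))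
    (hT : Typed Γ P Δ) :
    (∀ k ∈ tys,
      ((Finset.range (graphOf P).n).filter
        (fun p => k ∈ (graphOf P).labels p)).card ≤ 1) ∧
    (NoTopRes P → (graphOf P).edges.length ≤ bots.card) := by
  obtain ⟨h1, h2⟩ := graph_bounds_aux hT
  refine ⟨fun k hk => ?_, fun hnt => h2 bots (fun k hk => (hbots k).2 hk) hnt⟩
  obtain ⟨α, hα⟩ := (htys k).1 hk
  exact h1 k α hα

end Sess
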